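/- Domination is preserved under substitution: if θ₂ is dominated by θ₁ (i.e., |θ₁| ≤ |θ₂| as weights and sat(θ₂) ⊆ sat(θ₁)), then for any positive Boolean formula θ, the formula θ[θ₂ ← θ₁] obtained by replacing every occurrence of θ₂ with θ₁ dominates θ. -/

import Mathlib

/-- Positive Boolean formulas over an index type `ι` of atoms. -/
inductive PBF (ι : Type) : Type where
  | empty : PBF ι
  | atom : ι → PBF ι
  | union : PBF ι → PBF ι → PBF ι
  | inter : PBF ι → PBF ι → PBF ι
deriving DecidableEq

/-- Interpretation of a positive Boolean formula, given the sets denoted by atoms. -/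
def PBF.eval {ι α : Type} (val : ι → Set α) : PBF ι → Set α
  | .empty => ∅
  | .atom i => val i
  | .union a b => a.eval val ∪ b.eval val
  | .inter a b => a.eval val ∩ b.eval val

/-- Weight of a positive Boolean formula, given weights of the atoms. -/
def PBF.wt {ι : Type} (w : ι → ℕ) : PBF ι → ℕ
  | .empty => 0
  | .atom i => w i
  | .union a b => 1 + a.wt w + b.wt w
  | .inter a b => 1 + a.wt w + b.wt w

/-- The set of elements of `P ∪ N` correctly classified by a set `S`. -/
def satSet {α : Type} (P N S : Set α) : Set α := (S ∩ P) ∪ (N \ S)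

/-- Substitution `θ[θ₂ ← θ₁]`: replace every occurrence of `θ₂` in `θ` by `θ₁`. -/
def PBF.subst {ι : Type} [DecidableEq ι] (θ θ₂ θ₁ : PBF ι) : PBF ι :=
  if θ = θ₂ then θ₁ else
    match θ with
    | .union a b => .union (a.subst θ₂ θ₁) (b.subst θ₂ θ₁)
    | .inter a b => .inter (a.subst θ₂ θ₁) (b.subst θ₂ θ₁)
    | x => x

/-- `Dominates val w P N θ₁ θ₂` means `θ₂ ⪯ θ₁`:
`wt θ₁ ≤ wt θ₂` and `sat θ₂ ⊆ sat θ₁`. -/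
def Dominates {ι α : Type} (val : ι → Set α) (w : ι → ℕ) (P N : Set α)
    (θ₁ θ₂ : PBF ι) : Prop :=
  θ₁.wt w ≤ θ₂.wt w ∧ satSet P N (θ₂.eval val) ⊆ satSet P N (θ₁.eval val)

/-!
Domination is a congruence for `∪` and `∩`: weights add, and on `P \ N` (resp. `N \ P`) a point
is correctly classified iff it lies (resp. does not lie) in the set, so correctness is preserved by
the monotone operations. Induction on `θ` then carries `θ₂ ⪯ θ₁` from the replaced occurrences
to the whole formula.
-/

section Domination

variable {ι α : Type} {P N : Set α}

-- Every point of `P ∩ N` is correctly classified by every set.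
theorem satSet_subset_satSet_iff {S S' : Set α} :
    satSet P N S ⊆ satSet P N S' ↔ S ∩ (P \ N) ⊆ S' ∧ S' ∩ (N \ P) ⊆ S := by
  simp only [satSet, Set.subset_def, Set.mem_union, Set.mem_inter_iff, Set.mem_sdiff]
  refine ⟨fun h => ⟨fun x hx => ?_, fun x hx => ?_⟩, fun h x hx => ?_⟩
  · have := h x
    tauto
  · have := h x
    tauto
  · have := h.1 x
    have := h.2 x
    tauto

theorem satSet_union_subset_union {a b a' b' : Set α}
    (ha : satSet P N a ⊆ satSet P N a') (hb : satSet P N b ⊆ satSet P N b') :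
    satSet P N (a ∪ b) ⊆ satSet P N (a' ∪ b') := by
  rw [satSet_subset_satSet_iff] at *
  constructor
  · rw [Set.union_inter_distrib_right]
    exact Set.union_subset_union ha.1 hb.1
  · rw [Set.union_inter_distrib_right]
    exact Set.union_subset_union ha.2 hb.2

theorem satSet_inter_subset_inter {a b a' b' : Set α}
    (ha : satSet P N a ⊆ satSet P N a') (hb : satSet P N b ⊆ satSet P N b') :
    satSet P N (a ∩ b) ⊆ satSet P N (a' ∩ b') := by
  rw [satSet_subset_satSet_iff] at *
  constructor
  · exact Set.subset_inter
      ((Set.inter_subset_inter_left _ Set.inter_subset_left).trans ha.1)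
      ((Set.inter_subset_inter_left _ Set.inter_subset_right).trans hb.1)
  · exact Set.subset_inter
      ((Set.inter_subset_inter_left _ Set.inter_subset_left).trans ha.2)
      ((Set.inter_subset_inter_left _ Set.inter_subset_right).trans hb.2)

variable {val : ι → Set α} {w : ι → ℕ}

theorem Dominates.refl (θ : PBF ι) : Dominates val w P N θ θ :=
  ⟨le_rfl, subset_rfl⟩

theorem Dominates.union {a b a' b' : PBF ι} (ha : Dominates val w P N a' a)
    (hb : Dominates val w P N b' b) : Dominates val w P N (a'.union b') (a.union b) :=
  ⟨add_le_add (add_le_add_right ha.1 1) hb.1, satSet_union_subset_union ha.2 hb.2⟩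

theorem Dominates.inter {a b a' b' : PBF ι} (ha : Dominates val w P N a' a)
    (hb : Dominates val w P N b' b) : Dominates val w P N (a'.inter b') (a.inter b) :=
  ⟨add_le_add (add_le_add_right ha.1 1) hb.1, satSet_inter_subset_inter ha.2 hb.2⟩

end Domination

theorem stmt_6_general {ι α : Type} [DecidableEq ι] (P N : Set α) (val : ι → Set α) (w : ι → ℕ)
    (θ₁ θ₂ : PBF ι) (hdom : Dominates val w P N θ₁ θ₂) (θ : PBF ι) :
    Dominates val w P N (θ.subst θ₂ θ₁) θ := by
  induction θ with
  | empty | atom =>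
    unfold PBF.subst
    split_ifs with h
    · exact h ▸ hdom
    · exact .refl _
  | union a b iha ihb =>
    unfold PBF.subst
    split_ifs with h
    · exact h ▸ hdom
    · exact iha.union ihb
  | inter a b iha ihb =>
    unfold PBF.subst
    split_ifs with h
    · exact h ▸ hdom
    · exact iha.inter ihb

/-- if `θ₂ ⪯ θ₁`, then `θ ⪯ θ[θ₂ ← θ₁]` for every formula `θ`. -/
theorem stmt_6 {ι α : Type} [DecidableEq ι] (P N : Set α) (hP : P.Finite)
    (hN : N.Finite) (hd : Disjoint P N) (val : ι → Set α) (w : ι → ℕ)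
    (hw : ∀ i, 1 ≤ w i) (θ₁ θ₂ : PBF ι)
    (hdom : Dominates val w P N θ₁ θ₂) (θ : PBF ι) :
    Dominates val w P N (θ.subst θ₂ θ₁) θ :=
  stmt_6_general P N val w θ₁ θ₂ hdom θ
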